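/- Let a₁, a₂, a₃ be pairwise distinct positive reals, g₁, g₂ > 0, A = [[−a₁,0,0],[g₁,−a₂,0],[0,g₂,−a₃]], B = (1,0,0)ᵀ. Then for every T > 0 the vector D := A · (exp(−T·A) − I)⁻¹ · B is entrywise strictly negative. -/

import Mathlib

/-!
Put `L := -T • A`, a lower bidiagonal matrix with the distinct eigenvalues `xᵢ = T aᵢ > 0` and
subdiagonal entries `-T gᵢ`, and `φ x := x / (eˣ - 1)`. Since `A = -T⁻¹ • L`, we get
`D = -T⁻¹ • φ(L) e₁`, and diagonalising `L` shows that `φ(L) e₁` is the vector of divided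
differences `(φ[x₁], -T g₁ φ[x₁, x₂], T² g₁ g₂ φ[x₁, x₂, x₃])`. The three signs then come from
`φ` being positive, strictly decreasing and strictly convex on `(0, ∞)`.
-/

open Matrix Real Set

lemma exp_sub_one_ne_zero {x : ℝ} (hx : x ≠ 0) : exp x - 1 ≠ 0 :=
  sub_ne_zero.2 fun h ↦ hx (exp_eq_one_iff x |>.1 h)

lemma exp_sub_one_pos {x : ℝ} (hx : 0 < x) : 0 < exp x - 1 :=
  sub_pos.2 (one_lt_exp_iff.2 hx)

lemma mul_exp_sub_exp_add_one_pos {x : ℝ} (hx : x ≠ 0) : 0 < x * exp x - exp x + 1 := by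
  have h := add_one_lt_exp (neg_ne_zero.2 hx)
  have h' : exp (-x) * exp x = 1 := by rw [← exp_add, neg_add_cancel, exp_zero]
  nlinarith [exp_pos x]

lemma mul_exp_add_self_sub_two_mul_exp_add_two_pos {x : ℝ} (hx : 0 < x) :
    0 < x * exp x + x - 2 * exp x + 2 := by
  have hmono : StrictMonoOn (fun y ↦ y * exp y + y - 2 * exp y + 2) (Ici 0) := by
    refine strictMonoOn_of_deriv_pos (convex_Ici 0) (by fun_prop) fun y hy ↦ ?_
    rw [interior_Ici, mem_Ioi] at hy
    have hd : HasDerivAt (fun y ↦ y * exp y + y - 2 * exp y + 2)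
        (1 * exp y + y * exp y + 1 - 2 * exp y) y :=
      ((((hasDerivAt_id y).mul (hasDerivAt_exp y)).add (hasDerivAt_id y)).sub
        ((hasDerivAt_exp y).const_mul 2)).add_const 2
    rw [hd.deriv]
    linarith [mul_exp_sub_exp_add_one_pos hy.ne']
  simpa using hmono self_mem_Ici hx.le hx

lemma hasDerivAt_div_exp_sub_one {x : ℝ} (hx : x ≠ 0) :
    HasDerivAt (fun x ↦ x / (exp x - 1)) ((exp x - 1 - x * exp x) / (exp x - 1) ^ 2) x := by
  refine ((hasDerivAt_id' x).div ((hasDerivAt_exp x).sub_const 1)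
    (exp_sub_one_ne_zero hx)).congr_deriv ?_
  ring

lemma hasDerivAt_deriv_div_exp_sub_one {x : ℝ} (hx : x ≠ 0) :
    HasDerivAt (fun x ↦ (exp x - 1 - x * exp x) / (exp x - 1) ^ 2)
      (exp x * (x * exp x + x - 2 * exp x + 2) / (exp x - 1) ^ 3) x := by
  have hne := exp_sub_one_ne_zero hx
  refine ((((hasDerivAt_exp x).sub_const 1).sub ((hasDerivAt_id' x).mul (hasDerivAt_exp x))).div
    (((hasDerivAt_exp x).sub_const 1).pow 2) (pow_ne_zero 2 hne)).congr_deriv ?_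
  simp only [Pi.sub_apply, Pi.mul_apply, Pi.pow_apply]
  field_simp
  ring

lemma strictAntiOn_div_exp_sub_one : StrictAntiOn (fun x ↦ x / (exp x - 1)) (Ioi 0) := by
  refine strictAntiOn_of_deriv_neg (convex_Ioi 0) ?_ fun x hx ↦ ?_
  · exact continuousOn_id.div (by fun_prop) fun x hx ↦ exp_sub_one_ne_zero (ne_of_gt hx)
  rw [interior_Ioi, mem_Ioi] at hx
  rw [(hasDerivAt_div_exp_sub_one hx.ne').deriv]
  refine div_neg_of_neg_of_pos ?_ (pow_pos (exp_sub_one_pos hx) 2)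
  linarith [mul_exp_sub_exp_add_one_pos hx.ne']

lemma strictConvexOn_div_exp_sub_one : StrictConvexOn ℝ (Ioi 0) (fun x ↦ x / (exp x - 1)) := by
  refine strictConvexOn_of_deriv2_pos (convex_Ioi 0) ?_ fun x hx ↦ ?_
  · exact continuousOn_id.div (by fun_prop) fun x hx ↦ exp_sub_one_ne_zero (ne_of_gt hx)
  rw [interior_Ioi, mem_Ioi] at hx
  have hderiv : deriv (fun x ↦ x / (exp x - 1)) =ᶠ[nhds x]
      fun x ↦ (exp x - 1 - x * exp x) / (exp x - 1) ^ 2 := by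
    filter_upwards [Ioi_mem_nhds hx] with y hy
    exact (hasDerivAt_div_exp_sub_one (ne_of_gt hy)).deriv
  rw [Function.iterate_succ_apply, Function.iterate_one, hderiv.deriv_eq,
    (hasDerivAt_deriv_div_exp_sub_one hx.ne').deriv]
  exact div_pos (mul_pos (exp_pos x) (mul_exp_add_self_sub_two_mul_exp_add_two_pos hx))
    (pow_pos (exp_sub_one_pos hx) 3)

noncomputable def dividedDifference₂ (f : ℝ → ℝ) (x y z : ℝ) : ℝ :=
  f x / ((x - y) * (x - z)) + f y / ((y - x) * (y - z)) + f z / ((z - x) * (z - y))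

lemma dividedDifference₂_swap₁₂ (f : ℝ → ℝ) (x y z : ℝ) :
    dividedDifference₂ f y x z = dividedDifference₂ f x y z := by
  unfold dividedDifference₂; ring

lemma dividedDifference₂_swap₂₃ (f : ℝ → ℝ) (x y z : ℝ) :
    dividedDifference₂ f x z y = dividedDifference₂ f x y z := by
  unfold dividedDifference₂; ring

lemma dividedDifference₂_eq_slope_sub_slope_div {f : ℝ → ℝ} {x y z : ℝ}
    (hxy : x ≠ y) (hxz : x ≠ z) (hyz : y ≠ z) :
    dividedDifference₂ f x y z = (slope f y z - slope f x y) / (z - x) := by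
  rw [dividedDifference₂, slope_def_field, slope_def_field]
  have := sub_ne_zero.2 hxy
  have := sub_ne_zero.2 hxz
  have := sub_ne_zero.2 hyz
  have := sub_ne_zero.2 hxy.symm
  have := sub_ne_zero.2 hxz.symm
  have := sub_ne_zero.2 hyz.symm
  field_simp
  ring

lemma StrictConvexOn.dividedDifference₂_pos_of_lt {s : Set ℝ} {f : ℝ → ℝ}
    (hf : StrictConvexOn ℝ s f) {x y z : ℝ} (hx : x ∈ s) (hz : z ∈ s) (hxy : x < y) (hyz : y < z) :
    0 < dividedDifference₂ f x y z := by
  rw [dividedDifference₂_eq_slope_sub_slope_div hxy.ne (hxy.trans hyz).ne hyz.ne,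
    slope_def_field, slope_def_field]
  exact div_pos (sub_pos.2 (hf.slope_strict_mono_adjacent hx hz hxy hyz)) (by linarith)

lemma StrictConvexOn.dividedDifference₂_pos {s : Set ℝ} {f : ℝ → ℝ}
    (hf : StrictConvexOn ℝ s f) {x y z : ℝ} (hx : x ∈ s) (hy : y ∈ s) (hz : z ∈ s)
    (hxy : x ≠ y) (hxz : x ≠ z) (hyz : y ≠ z) :
    0 < dividedDifference₂ f x y z := by
  rcases hxy.lt_or_gt with hxy | hxy <;> rcases hxz.lt_or_gt with hxz | hxz <;>
    rcases hyz.lt_or_gt with hyz | hyz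
  · exact hf.dividedDifference₂_pos_of_lt hx hz hxy hyz
  · rw [← dividedDifference₂_swap₂₃]; exact hf.dividedDifference₂_pos_of_lt hx hy hxz hyz
  · exact absurd (hxz.trans hxy) hyz.not_gt
  · rw [← dividedDifference₂_swap₂₃, ← dividedDifference₂_swap₁₂]
    exact hf.dividedDifference₂_pos_of_lt hz hy hxz hxy
  · rw [← dividedDifference₂_swap₁₂]; exact hf.dividedDifference₂_pos_of_lt hy hz hxy hxz
  · exact absurd (hyz.trans hxy) hxz.not_gt
  · rw [← dividedDifference₂_swap₁₂, ← dividedDifference₂_swap₂₃]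
    exact hf.dividedDifference₂_pos_of_lt hy hx hyz hxz
  · rw [← dividedDifference₂_swap₁₂, ← dividedDifference₂_swap₂₃, ← dividedDifference₂_swap₁₂]
    exact hf.dividedDifference₂_pos_of_lt hz hx hyz hxy

lemma Matrix.conj_diagonal_mul_inv_exp_sub_one {n : Type*} [Fintype n] [DecidableEq n]
    {P : Matrix n n ℝ} (hP : IsUnit P) {x : n → ℝ} (hx : ∀ i, x i ≠ 0) :
    P * diagonal x * P⁻¹ * (NormedSpace.exp (P * diagonal x * P⁻¹) - 1)⁻¹ =
      P * diagonal (fun i ↦ x i / (exp (x i) - 1)) * P⁻¹ := by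
  have hPP : P⁻¹ * P = 1 := nonsing_inv_mul P ((isUnit_iff_isUnit_det P).1 hP)
  have hPP' : P * P⁻¹ = 1 := mul_nonsing_inv P ((isUnit_iff_isUnit_det P).1 hP)
  have conj_mul (X Y : Matrix n n ℝ) : P * X * P⁻¹ * (P * Y * P⁻¹) = P * (X * Y) * P⁻¹ := by
    simp only [Matrix.mul_assoc, ← Matrix.mul_assoc P⁻¹ P, hPP, Matrix.one_mul]
  have hexp : NormedSpace.exp (P * diagonal x * P⁻¹) - 1 =
      P * diagonal (fun i ↦ exp (x i) - 1) * P⁻¹ := by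
    have hdiag : diagonal (fun i ↦ exp (x i) - 1) = diagonal (NormedSpace.exp x) - 1 := by
      rw [← diagonal_one, diagonal_sub, Pi.exp_def, Real.exp_eq_exp_ℝ]
    rw [hdiag, exp_conj _ _ hP, exp_diagonal, Matrix.mul_sub, Matrix.sub_mul, Matrix.mul_one, hPP']
  have hinv : (P * diagonal (fun i ↦ exp (x i) - 1) * P⁻¹)⁻¹ =
      P * diagonal (fun i ↦ (exp (x i) - 1)⁻¹) * P⁻¹ := by
    refine inv_eq_right_inv ?_
    simp only [conj_mul, diagonal_mul_diagonal, mul_inv_cancel₀ (exp_sub_one_ne_zero (hx _)),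
      diagonal_one, Matrix.mul_one, hPP']
  rw [hexp, hinv, conj_mul, diagonal_mul_diagonal]
  rfl

section LowerBidiagonal

variable (x₁ x₂ x₃ c₁ c₂ : ℝ)

/-- Column `j` is an eigenvector of `!![x₁, 0, 0; c₁, x₂, 0; 0, c₂, x₃]` for the eigenvalue `xⱼ`. -/
noncomputable def lowerBidiagonalEigenbasis : Matrix (Fin 3) (Fin 3) ℝ :=
  !![1, 0, 0;
     c₁ / (x₁ - x₂), 1, 0;
     c₁ * c₂ / ((x₁ - x₂) * (x₁ - x₃)), c₂ / (x₂ - x₃), 1]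

noncomputable def lowerBidiagonalEigenbasisInv : Matrix (Fin 3) (Fin 3) ℝ :=
  !![1, 0, 0;
     -(c₁ / (x₁ - x₂)), 1, 0;
     c₁ * c₂ / ((x₁ - x₃) * (x₂ - x₃)), -(c₂ / (x₂ - x₃)), 1]

variable {x₁ x₂ x₃}

lemma lowerBidiagonalEigenbasis_mul_inv (h₁₂ : x₁ ≠ x₂) (h₁₃ : x₁ ≠ x₃) (h₂₃ : x₂ ≠ x₃) :
    lowerBidiagonalEigenbasis x₁ x₂ x₃ c₁ c₂ * lowerBidiagonalEigenbasisInv x₁ x₂ x₃ c₁ c₂ = 1 := by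
  have := sub_ne_zero.2 h₁₂
  have := sub_ne_zero.2 h₁₃
  have := sub_ne_zero.2 h₂₃
  rw [lowerBidiagonalEigenbasis, lowerBidiagonalEigenbasisInv, mul_fin_three, one_fin_three]
  ext i j
  fin_cases i <;> fin_cases j <;> simp
  field_simp
  ring

lemma inv_lowerBidiagonalEigenbasis (h₁₂ : x₁ ≠ x₂) (h₁₃ : x₁ ≠ x₃) (h₂₃ : x₂ ≠ x₃) :
    (lowerBidiagonalEigenbasis x₁ x₂ x₃ c₁ c₂)⁻¹ = lowerBidiagonalEigenbasisInv x₁ x₂ x₃ c₁ c₂ :=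
  inv_eq_right_inv (lowerBidiagonalEigenbasis_mul_inv c₁ c₂ h₁₂ h₁₃ h₂₃)

lemma isUnit_lowerBidiagonalEigenbasis (h₁₂ : x₁ ≠ x₂) (h₁₃ : x₁ ≠ x₃) (h₂₃ : x₂ ≠ x₃) :
    IsUnit (lowerBidiagonalEigenbasis x₁ x₂ x₃ c₁ c₂) :=
  (isUnit_iff_isUnit_det _).2 (isUnit_det_of_right_inverse
    (lowerBidiagonalEigenbasis_mul_inv c₁ c₂ h₁₂ h₁₃ h₂₃))

lemma lowerBidiagonal_eq_conj_diagonal (h₁₂ : x₁ ≠ x₂) (h₁₃ : x₁ ≠ x₃) (h₂₃ : x₂ ≠ x₃) :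
    !![x₁, 0, 0; c₁, x₂, 0; 0, c₂, x₃] =
      lowerBidiagonalEigenbasis x₁ x₂ x₃ c₁ c₂ * diagonal ![x₁, x₂, x₃] *
        (lowerBidiagonalEigenbasis x₁ x₂ x₃ c₁ c₂)⁻¹ := by
  have := sub_ne_zero.2 h₁₂
  have := sub_ne_zero.2 h₁₃
  have := sub_ne_zero.2 h₂₃
  rw [inv_lowerBidiagonalEigenbasis c₁ c₂ h₁₂ h₁₃ h₂₃, lowerBidiagonalEigenbasis,
    lowerBidiagonalEigenbasisInv, diagonal_fin_three, mul_fin_three, mul_fin_three]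
  ext i j
  fin_cases i <;> fin_cases j <;> simp <;> field_simp <;> ring

/-- Opitz's formula: the left-hand side is `f(L)` for `L = !![x₁, 0, 0; c₁, x₂, 0; 0, c₂, x₃]`,
and its first column consists of divided differences of `f` at the eigenvalues. -/
lemma lowerBidiagonalEigenbasis_conj_diagonal_mulVec (h₁₂ : x₁ ≠ x₂) (h₁₃ : x₁ ≠ x₃) (h₂₃ : x₂ ≠ x₃)
    (f : ℝ → ℝ) :
    (lowerBidiagonalEigenbasis x₁ x₂ x₃ c₁ c₂ * diagonal (fun i ↦ f (![x₁, x₂, x₃] i)) *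
        (lowerBidiagonalEigenbasis x₁ x₂ x₃ c₁ c₂)⁻¹) *ᵥ ![1, 0, 0] =
      ![f x₁, c₁ * slope f x₁ x₂, c₁ * c₂ * dividedDifference₂ f x₁ x₂ x₃] := by
  have := sub_ne_zero.2 h₁₂
  have := sub_ne_zero.2 h₁₃
  have := sub_ne_zero.2 h₂₃
  have := sub_ne_zero.2 h₁₂.symm
  have := sub_ne_zero.2 h₁₃.symm
  have := sub_ne_zero.2 h₂₃.symm
  rw [inv_lowerBidiagonalEigenbasis c₁ c₂ h₁₂ h₁₃ h₂₃, lowerBidiagonalEigenbasis,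
    lowerBidiagonalEigenbasisInv, diagonal_fin_three, mul_fin_three, mul_fin_three]
  ext i
  fin_cases i <;> simp [dividedDifference₂, slope_def_field] <;> field_simp <;> ring

lemma lowerBidiagonal_mul_inv_exp_sub_one_mulVec (hx₁ : x₁ ≠ 0) (hx₂ : x₂ ≠ 0) (hx₃ : x₃ ≠ 0)
    (h₁₂ : x₁ ≠ x₂) (h₁₃ : x₁ ≠ x₃) (h₂₃ : x₂ ≠ x₃) :
    (!![x₁, 0, 0; c₁, x₂, 0; 0, c₂, x₃] *
        (NormedSpace.exp !![x₁, 0, 0; c₁, x₂, 0; 0, c₂, x₃] - 1)⁻¹) *ᵥ ![1, 0, 0] =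
      ![x₁ / (exp x₁ - 1), c₁ * slope (fun x ↦ x / (exp x - 1)) x₁ x₂,
        c₁ * c₂ * dividedDifference₂ (fun x ↦ x / (exp x - 1)) x₁ x₂ x₃] := by
  have hx : ∀ i, ![x₁, x₂, x₃] i ≠ 0 := by
    intro i
    fin_cases i <;> assumption
  rw [lowerBidiagonal_eq_conj_diagonal c₁ c₂ h₁₂ h₁₃ h₂₃,
    conj_diagonal_mul_inv_exp_sub_one (isUnit_lowerBidiagonalEigenbasis c₁ c₂ h₁₂ h₁₃ h₂₃) hx,
    lowerBidiagonalEigenbasis_conj_diagonal_mulVec c₁ c₂ h₁₂ h₁₃ h₂₃ fun x ↦ x / (exp x - 1)]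

end LowerBidiagonal

/-- For the IGO system matrix `A = [[−a₁,0,0],[g₁,−a₂,0],[0,g₂,−a₃]]`
(pairwise distinct positive `a₁,a₂,a₃`, `g₁,g₂ > 0`), `B = (1,0,0)ᵀ` and every `T > 0`,
the vector `D := A·(exp(−T·A) − I)⁻¹·B` is entrywise strictly negative. -/
theorem igo_D_vector_negative (a₁ a₂ a₃ g₁ g₂ : ℝ)
    (ha₁ : 0 < a₁) (ha₂ : 0 < a₂) (ha₃ : 0 < a₃)
    (h12 : a₁ ≠ a₂) (h13 : a₁ ≠ a₃) (h23 : a₂ ≠ a₃)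
    (hg₁ : 0 < g₁) (hg₂ : 0 < g₂)
    (A : Matrix (Fin 3) (Fin 3) ℝ)
    (hA : A = !![-a₁, 0, 0; g₁, -a₂, 0; 0, g₂, -a₃])
    (B : Fin 3 → ℝ) (hB : B = ![1, 0, 0])
    (T : ℝ) (hT : 0 < T)
    (D : Fin 3 → ℝ)
    (hD : D = A.mulVec (((NormedSpace.exp ((-T) • A) - 1)⁻¹).mulVec B)) :
    ∀ i, D i < 0 := by
  have hx₁ : 0 < T * a₁ := mul_pos hT ha₁
  have hx₂ : 0 < T * a₂ := mul_pos hT ha₂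
  have hx₃ : 0 < T * a₃ := mul_pos hT ha₃
  have hx₁₂ : T * a₁ ≠ T * a₂ := (mul_right_injective₀ hT.ne').ne h12
  have hx₁₃ : T * a₁ ≠ T * a₃ := (mul_right_injective₀ hT.ne').ne h13
  have hx₂₃ : T * a₂ ≠ T * a₃ := (mul_right_injective₀ hT.ne').ne h23
  have hL : (-T) • A = !![T * a₁, 0, 0; -(T * g₁), T * a₂, 0; 0, -(T * g₂), T * a₃] := by
    rw [hA]
    ext i j
    fin_cases i <;> fin_cases j <;> simp
  have hA' : A = (-T⁻¹) • !![T * a₁, 0, 0; -(T * g₁), T * a₂, 0; 0, -(T * g₂), T * a₃] := by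
    rw [← hL, smul_smul, neg_mul_neg, inv_mul_cancel₀ hT.ne', one_smul]
  rw [hD, mulVec_mulVec, hL, hA', smul_mul_assoc, smul_mulVec, hB,
    lowerBidiagonal_mul_inv_exp_sub_one_mulVec _ _ hx₁.ne' hx₂.ne' hx₃.ne' hx₁₂ hx₁₃ hx₂₃]
  intro i
  refine mul_neg_of_neg_of_pos (neg_lt_zero.2 (inv_pos.2 hT)) ?_
  have hTg₁ : -(T * g₁) < 0 := neg_lt_zero.2 (mul_pos hT hg₁)
  have hTg₂ : -(T * g₂) < 0 := neg_lt_zero.2 (mul_pos hT hg₂)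
  fin_cases i
  · exact div_pos hx₁ (exp_sub_one_pos hx₁)
  · exact mul_pos_of_neg_of_neg hTg₁ (strictAntiOn_div_exp_sub_one.slope_neg hx₁ hx₂ hx₁₂)
  · exact mul_pos (mul_pos_of_neg_of_neg hTg₁ hTg₂)
      (strictConvexOn_div_exp_sub_one.dividedDifference₂_pos hx₁ hx₂ hx₃ hx₁₂ hx₁₃ hx₂₃)
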